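/- arXiv:2206.02347 — 7 statements merged into one kernel-verified Lean document; each statement's English description precedes it below -/
import Mathlib

section
/- Let G be a finite nonabelian simple group acting on a set Ω with orbits Δ₁,…,Δ_t, where t ≥ 2. Suppose that (i) for each pair i, j ∈ {1,…,t} there is a point β ∈ Δ_i such that the stabiliser G_β is not transitive on Δ_j, and (ii) for some integer k ≥ 2 and for each i = 1,…,t, the induced permutation group G^{Δ_i} is isomorphic to G (i.e. G acts faithfully on Δ_i) and satisfies (G^{Δ_i})^{(k),Δ_i} = G^{Δ_i}. Then the induced permutation group G^Ω is isomorphic to G and satisfies (G^Ω)^{(k),Ω} = G^Ω. -/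
/-- The `k`-closure of a set `S` of permutations of `Ω`. -/
def kClosure {Ω : Type*} (S : Set (Equiv.Perm Ω)) (k : ℕ) : Set (Equiv.Perm Ω) :=
  {g | ∀ f : Fin k → Ω, ∃ h ∈ S, ∀ i, g (f i) = h (f i)}

/-- The permutation group induced on an invariant subset `S ⊆ Ω` by a group `G` acting
on `Ω`. -/
def inducedPerms (G : Type*) [Group G] {Ω : Type*} [MulAction G Ω] (S : Set Ω) :
    Set (Equiv.Perm S) :=
  {p | ∃ g : G, ∀ x : S, (p x : Ω) = g • (x : Ω)}

/-! For `c` in the `k`-closure of `G^Ω` and each orbit `Δᵢ`, `k`-closedness of `G^{Δᵢ}` gives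
some `gᵢ ∈ G` with `c = gᵢ` on `Δᵢ`. For two orbits `Δᵢ, Δⱼ`, the pairs `(gᵢ, gⱼ)` so
obtained form a subgroup of `G × G` containing the diagonal; as `G` is simple, it is the
diagonal or everything. It cannot be everything: `(1, g)` would be realised by some `c`
fixing `β ∈ Δᵢ` and moving `y ∈ Δⱼ` to `g • y`, and since `k ≥ 2` some element of `G` agrees
with `c` on `(β, y)`, making `G_β` transitive on `Δⱼ`. Hence `gᵢ = gⱼ` for all `i, j`, so
`c ∈ G^Ω`. -/

open Equiv MulAction

theorem Subgroup.eq_of_mk_mem_of_diagonal_le {G : Type*} [Group G] [IsSimpleGroup G]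
    {H : Subgroup (G × G)} (hdiag : ∀ g : G, (g, g) ∈ H) (htop : H ≠ ⊤)
    {a b : G} (hab : (a, b) ∈ H) : a = b := by
  by_contra hne
  apply htop
  set N := H.comap (MonoidHom.inl G G)
  have mem_N : ∀ n : G, n ∈ N ↔ (n, 1) ∈ H := fun _ => Iff.rfl
  have hN : N.Normal := ⟨fun n hn g => by
    simpa [mem_N] using H.mul_mem (H.mul_mem (hdiag g) hn) (H.inv_mem (hdiag g))⟩
  have hab_N : a * b⁻¹ ∈ N := by
    simpa [mem_N] using H.mul_mem hab (H.inv_mem (hdiag b))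
  have hN_top : N = ⊤ := hN.eq_bot_or_eq_top.resolve_left fun hbot =>
    hne (mul_inv_eq_one.mp (Subgroup.mem_bot.mp (hbot ▸ hab_N)))
  refine eq_top_iff.mpr fun q _ => ?_
  have hq : (q.1 * q.2⁻¹, (1 : G)) ∈ H := (mem_N _).mp (hN_top ▸ Subgroup.mem_top _)
  simpa using H.mul_mem hq (hdiag q.2)

section KClosure

variable {Ω : Type*}

def kClosureSubgroup (H : Subgroup (Perm Ω)) (k : ℕ) : Subgroup (Perm Ω) where
  carrier := kClosure H k
  one_mem' _ := ⟨1, H.one_mem, fun _ => rfl⟩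
  mul_mem' {a b} ha hb f := by
    obtain ⟨hb', hb'H, hfb⟩ := hb f
    obtain ⟨ha', ha'H, hfa⟩ := ha fun i => b (f i)
    exact ⟨ha' * hb', H.mul_mem ha'H hb'H, fun i => by
      rw [Perm.mul_apply, Perm.mul_apply, hfa, hfb]⟩
  inv_mem' {a} ha f := by
    obtain ⟨h, hH, hf⟩ := ha fun i => a⁻¹ (f i)
    refine ⟨h⁻¹, H.inv_mem hH, fun i => ?_⟩
    rw [Perm.eq_inv_iff_eq, ← hf i]
    simp

theorem le_kClosureSubgroup (H : Subgroup (Perm Ω)) (k : ℕ) : H ≤ kClosureSubgroup H k :=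
  fun h hH _ => ⟨h, hH, fun _ => rfl⟩

variable {S : Set (Perm Ω)} {k : ℕ} {c : Perm Ω}

theorem exists_apply_eq_of_mem_kClosure (hk : 0 < k) (hc : c ∈ kClosure S k) (x : Ω) :
    ∃ h ∈ S, c x = h x := by
  obtain ⟨h, hS, hh⟩ := hc fun _ => x
  exact ⟨h, hS, hh ⟨0, hk⟩⟩

theorem exists_apply_eq_apply_eq_of_mem_kClosure (hk : 2 ≤ k) (hc : c ∈ kClosure S k)
    (x y : Ω) : ∃ h ∈ S, c x = h x ∧ c y = h y := by
  obtain ⟨h, hS, hh⟩ := hc fun i => if (i : ℕ) = 0 then x else y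
  exact ⟨h, hS, by simpa using hh ⟨0, by omega⟩, by simpa using hh ⟨1, hk⟩⟩

end KClosure

section Action

variable {G Ω : Type*} [Group G] [MulAction G Ω] {k : ℕ} {c : Perm Ω}

theorem exists_smul_eq_of_mem_kClosureSubgroup (hk : 0 < k)
    (hc : c ∈ kClosureSubgroup (toPermHom G Ω).range k) (x : Ω) : ∃ g : G, c x = g • x := by
  obtain ⟨_, ⟨g, rfl⟩, hg⟩ := exists_apply_eq_of_mem_kClosure hk hc x
  exact ⟨g, hg⟩

theorem apply_mem_iff_of_mem_kClosureSubgroup (hk : 0 < k) {A : Set Ω}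
    (hA : ∀ g : G, ∀ x ∈ A, g • x ∈ A) (hc : c ∈ kClosureSubgroup (toPermHom G Ω).range k)
    (x : Ω) : c x ∈ A ↔ x ∈ A := by
  refine ⟨fun hcx => ?_, fun hx => ?_⟩
  · obtain ⟨g, hg⟩ := exists_smul_eq_of_mem_kClosureSubgroup hk (inv_mem hc) (c x)
    simp only [Perm.coe_inv, symm_apply_apply] at hg
    exact hg ▸ hA g _ hcx
  · obtain ⟨g, hg⟩ := exists_smul_eq_of_mem_kClosureSubgroup hk hc x
    exact hg ▸ hA g x hx

theorem exists_smul_eqOn_of_mem_kClosureSubgroup (hk : 0 < k) {A : Set Ω}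
    (hA : ∀ g : G, ∀ x ∈ A, g • x ∈ A)
    (hclosed : kClosure (inducedPerms G A) k = inducedPerms G A)
    (hc : c ∈ kClosureSubgroup (toPermHom G Ω).range k) : ∃ g : G, Set.EqOn c (g • ·) A := by
  have hA_iff (g : G) (x : Ω) : g • x ∈ A ↔ x ∈ A :=
    ⟨fun h => by simpa using hA g⁻¹ _ h, hA g x⟩
  have hres : c.subtypePerm (apply_mem_iff_of_mem_kClosureSubgroup hk hA hc) ∈
      kClosure (inducedPerms G A) k := fun f => by
    obtain ⟨_, ⟨g, rfl⟩, hg⟩ := hc fun i => (f i : Ω)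
    exact ⟨(toPerm g : Perm Ω).subtypePerm (hA_iff g), ⟨g, fun _ => rfl⟩,
      fun i => Subtype.ext (hg i)⟩
  rw [hclosed] at hres
  obtain ⟨g, hg⟩ := hres
  exact ⟨g, fun x hx => hg ⟨x, hx⟩⟩

section RealizedPairs

variable {A B : Set Ω} {a b : G} {d : Perm Ω}

theorem Set.EqOn.perm_mul (hA : ∀ g : G, ∀ x ∈ A, g • x ∈ A) (hc : Set.EqOn c (a • ·) A)
    (hd : Set.EqOn d (b • ·) A) : Set.EqOn ⇑(c * d) ((a * b) • ·) A := fun x hx =>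
  (congrArg c (hd hx)).trans ((hc (hA b x hx)).trans (mul_smul a b x).symm)

theorem Set.EqOn.perm_inv (hA : ∀ g : G, ∀ x ∈ A, g • x ∈ A) (hc : Set.EqOn c (a • ·) A) :
    Set.EqOn ⇑c⁻¹ (a⁻¹ • ·) A := fun x hx =>
  Perm.inv_eq_iff_eq.mpr ((hc (hA _ x hx)).trans (smul_inv_smul a x)).symm

def realizedPairs (C : Subgroup (Perm Ω)) (hA : ∀ g : G, ∀ x ∈ A, g • x ∈ A)
    (hB : ∀ g : G, ∀ x ∈ B, g • x ∈ B) : Subgroup (G × G) where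
  carrier := {p | ∃ c ∈ C, Set.EqOn c (p.1 • ·) A ∧ Set.EqOn c (p.2 • ·) B}
  one_mem' := ⟨1, C.one_mem, fun x _ => (one_smul G x).symm, fun x _ => (one_smul G x).symm⟩
  mul_mem' := fun ⟨c, hc, hcA, hcB⟩ ⟨d, hd, hdA, hdB⟩ =>
    ⟨c * d, C.mul_mem hc hd, hcA.perm_mul hA hdA, hcB.perm_mul hB hdB⟩
  inv_mem' := fun ⟨c, hc, hcA, hcB⟩ => ⟨c⁻¹, C.inv_mem hc, hcA.perm_inv hA, hcB.perm_inv hB⟩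

theorem mem_realizedPairs {C : Subgroup (Perm Ω)} {hA : ∀ g : G, ∀ x ∈ A, g • x ∈ A}
    {hB : ∀ g : G, ∀ x ∈ B, g • x ∈ B} {p : G × G} :
    p ∈ realizedPairs C hA hB ↔ ∃ c ∈ C, Set.EqOn c (p.1 • ·) A ∧ Set.EqOn c (p.2 • ·) B :=
  Iff.rfl

theorem realizedPairs_kClosureSubgroup_ne_top (hk : 2 ≤ k) (hA : ∀ g : G, ∀ x ∈ A, g • x ∈ A)
    (hB : ∀ g : G, ∀ x ∈ B, g • x ∈ B) (hB_orbit : ∀ y ∈ B, ∀ z ∈ B, z ∈ orbit G y)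
    {β : Ω} (hβ : β ∈ A) (hintrans : ¬ ∀ y ∈ B, ∀ z ∈ B, ∃ g : G, g • β = β ∧ g • y = z) :
    realizedPairs (kClosureSubgroup (toPermHom G Ω).range k) hA hB ≠ ⊤ := by
  intro htop
  refine hintrans fun y hy z hz => ?_
  obtain ⟨g₀, rfl⟩ := hB_orbit y hy z hz
  obtain ⟨c, hc, hcA, hcB⟩ := mem_realizedPairs.mp (htop ▸ Subgroup.mem_top ((1 : G), g₀))
  obtain ⟨_, ⟨g, rfl⟩, hgβ, hgy⟩ := exists_apply_eq_apply_eq_of_mem_kClosure hk hc β y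
  exact ⟨g, (hgβ.symm.trans (hcA hβ)).trans (one_smul G β), hgy.symm.trans (hcB hy)⟩

theorem eq_of_eqOn_of_mem_kClosureSubgroup [IsSimpleGroup G] (hk : 2 ≤ k)
    (hA : ∀ g : G, ∀ x ∈ A, g • x ∈ A) (hB : ∀ g : G, ∀ x ∈ B, g • x ∈ B)
    (hB_orbit : ∀ y ∈ B, ∀ z ∈ B, z ∈ orbit G y)
    {β : Ω} (hβ : β ∈ A) (hintrans : ¬ ∀ y ∈ B, ∀ z ∈ B, ∃ g : G, g • β = β ∧ g • y = z)
    (hc : c ∈ kClosureSubgroup (toPermHom G Ω).range k)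
    (hcA : Set.EqOn c (a • ·) A) (hcB : Set.EqOn c (b • ·) B) : a = b :=
  Subgroup.eq_of_mk_mem_of_diagonal_le
    (fun g => mem_realizedPairs.mpr
      ⟨toPermHom G Ω g, le_kClosureSubgroup _ k (MonoidHom.mem_range.mpr ⟨g, rfl⟩),
        fun _ _ => rfl, fun _ _ => rfl⟩)
    (realizedPairs_kClosureSubgroup_ne_top hk hA hB hB_orbit hβ hintrans)
    (mem_realizedPairs.mpr ⟨c, hc, hcA, hcB⟩)

end RealizedPairs

end Action

theorem kClosure_of_intransitive_simple_general {G : Type*} [Group G]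
    (hsimple : IsSimpleGroup G)
    {Ω : Type*} [MulAction G Ω] (t : ℕ) (ht : 2 ≤ t) (Δ : Fin t → Set Ω)
    (horb : ∀ i, ∃ x : Ω, Δ i = MulAction.orbit G x)
    (hcover : ∀ x : Ω, ∃ i, x ∈ Δ i)
    (hstab : ∀ i j, ∃ β ∈ Δ i,
      ¬ (∀ y ∈ Δ j, ∀ z ∈ Δ j, ∃ g : G, g • β = β ∧ g • y = z))
    (k : ℕ) (hk : 2 ≤ k)
    (hfaith : ∀ i, ∀ g : G, (∀ x ∈ Δ i, g • x = x) → g = 1)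
    (hclosed : ∀ i, kClosure (inducedPerms G (Δ i)) k = inducedPerms G (Δ i)) :
    (∀ g : G, (∀ x : Ω, g • x = x) → g = 1) ∧
    kClosure (Set.range ⇑(MulAction.toPermHom G Ω)) k =
      Set.range ⇑(MulAction.toPermHom G Ω) := by
  have := hsimple
  have i₀ : Fin t := ⟨0, by omega⟩
  have hinv (i : Fin t) (g : G) (x : Ω) (hx : x ∈ Δ i) : g • x ∈ Δ i := by
    obtain ⟨y, hy⟩ := horb i
    rw [hy] at hx ⊢
    exact mem_orbit_of_mem_orbit g hx
  have horbit (i : Fin t) (y : Ω) (hy : y ∈ Δ i) (z : Ω) (hz : z ∈ Δ i) : z ∈ orbit G y := by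
    obtain ⟨x, hx⟩ := horb i
    rw [hx] at hy hz
    rwa [orbit_eq_iff.mpr hy]
  refine ⟨fun g hg => hfaith i₀ g fun x _ => hg x, ?_⟩
  rw [← MonoidHom.coe_range]
  refine subset_antisymm (fun c hc => ?_) (le_kClosureSubgroup _ k)
  obtain ⟨g, hg⟩ := exists_smul_eqOn_of_mem_kClosureSubgroup (by omega) (hinv i₀) (hclosed i₀) hc
  refine ⟨g, Perm.ext fun x => ?_⟩
  obtain ⟨i, hx⟩ := hcover x
  obtain ⟨b, hb⟩ := exists_smul_eqOn_of_mem_kClosureSubgroup (by omega) (hinv i) (hclosed i) hc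
  obtain ⟨β, hβ, hintrans⟩ := hstab i₀ i
  rw [eq_of_eqOn_of_mem_kClosureSubgroup hk (hinv i₀) (hinv i) (horbit i) hβ hintrans hc hg hb]
  exact (hb hx).symm

/-- Let `G` be a finite nonabelian simple group acting on a set `Ω` with (pairwise distinct)
orbits `Δ₁, …, Δ_t`, `t ≥ 2`. Suppose that (i) for each pair `i, j` there is a point
`β ∈ Δ_i` whose stabiliser is not transitive on `Δ_j`; and (ii) for some `k ≥ 2` and each
`i`, the group `G` acts faithfully on `Δ_i` (so `G^{Δ_i} ≅ G`) and the induced permutation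
group `G^{Δ_i}` equals its own `k`-closure. Then `G` acts faithfully on `Ω` (so `G^Ω ≅ G`)
and `G^Ω` equals its own `k`-closure. -/
theorem kClosure_of_intransitive_simple {G : Type*} [Group G] [Finite G]
    (hnonab : ∃ a b : G, a * b ≠ b * a) (hsimple : IsSimpleGroup G)
    {Ω : Type*} [MulAction G Ω] (t : ℕ) (ht : 2 ≤ t) (Δ : Fin t → Set Ω)
    (horb : ∀ i, ∃ x : Ω, Δ i = MulAction.orbit G x)
    (hcover : ∀ x : Ω, ∃ i, x ∈ Δ i)
    (hdist : Function.Injective Δ)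
    (hstab : ∀ i j, ∃ β ∈ Δ i,
      ¬ (∀ y ∈ Δ j, ∀ z ∈ Δ j, ∃ g : G, g • β = β ∧ g • y = z))
    (k : ℕ) (hk : 2 ≤ k)
    (hfaith : ∀ i, ∀ g : G, (∀ x ∈ Δ i, g • x = x) → g = 1)
    (hclosed : ∀ i, kClosure (inducedPerms G (Δ i)) k = inducedPerms G (Δ i)) :
    (∀ g : G, (∀ x : Ω, g • x = x) → g = 1) ∧
    kClosure (Set.range ⇑(MulAction.toPermHom G Ω)) k =
      Set.range ⇑(MulAction.toPermHom G Ω) :=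
  kClosure_of_intransitive_simple_general hsimple t ht Δ horb hcover hstab k hk hfaith hclosed
end

section
/- Let G be a finite nonabelian simple group acting on a set Ω with orbits Δ₁,…,Δ_t, where t ≥ 2, such that the actions of G on the orbits are pairwise equivalent (for each pair of orbits there is a G-equivariant bijection between them). If for some positive integer k and each i the induced permutation group G^{Δ_i} is isomorphic to G and satisfies (G^{Δ_i})^{(k),Δ_i} = G^{Δ_i}, then k ≥ 2 and the induced group G^Ω is isomorphic to G and satisfies (G^Ω)^{(k),Ω} = G^Ω. -/
/-!
If `k ≤ 1`, the `k`-closure of a transitive group is the full symmetric group, so `G` would map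
onto `Sym(Δ)` and, through the sign, onto `ℤˣ`, which a nonabelian simple group cannot do; hence
`k ≥ 2`. For the closure, restrict a permutation `g` of the `k`-closure of `G^Ω` to one orbit
`Δ₀`, where it is induced by some `c ∈ G`. Any other point `x` has an equivariant partner
`y ∈ Δ₀` with `G_y ≤ G_x`; since `k ≥ 2`, `g` agrees with some `h ∈ G` on the pair `(y, x)`, and
`c⁻¹ h ∈ G_y ≤ G_x` gives `g x = c • x`.
-/

open MulAction Equiv Function

section kClosure

variable {X : Type*}

lemma subset_kClosure (S : Set (Perm X)) (k : ℕ) : S ⊆ kClosure S k :=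
  fun g hg _ => ⟨g, hg, fun _ => rfl⟩

lemma kClosure_eq_univ_of_le_one {S : Set (Perm X)} (hne : S.Nonempty)
    (htrans : ∀ x y, ∃ h ∈ S, h x = y) {k : ℕ} (hk : k ≤ 1) : kClosure S k = Set.univ := by
  refine Set.eq_univ_of_forall fun g f => ?_
  interval_cases k
  · obtain ⟨h, hh⟩ := hne
    exact ⟨h, hh, fun i => i.elim0⟩
  · obtain ⟨h, hh, hx⟩ := htrans (f 0) (g (f 0))
    exact ⟨h, hh, fun i => by rw [Subsingleton.elim i 0, hx]⟩

end kClosure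

lemma not_surjective_of_isSimpleGroup {G A : Type*} [Group G] [IsSimpleGroup G]
    (hnonab : ∃ a b : G, a * b ≠ b * a) [CommGroup A] [Nontrivial A] (f : G →* A) :
    ¬ Surjective f := by
  intro hf
  rcases f.normal_ker.eq_bot_or_eq_top with hbot | htop
  · obtain ⟨a, b, hab⟩ := hnonab
    exact hab ((f.ker_eq_bot_iff.1 hbot) (by rw [map_mul, map_mul, mul_comm]))
  · obtain ⟨a, ha⟩ := exists_ne (1 : A)
    obtain ⟨g, rfl⟩ := hf a
    exact ha (f.mem_ker.1 (htop ▸ Subgroup.mem_top g))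

section Action

variable {G : Type*} [Group G]

theorem two_le_of_kClosure_range_toPermHom_eq [IsSimpleGroup G]
    (hnonab : ∃ a b : G, a * b ≠ b * a) {X : Type*} [MulAction G X] [Finite X]
    [IsPretransitive G X] [FaithfulSMul G X] {k : ℕ}
    (hk : kClosure (Set.range (toPermHom G X)) k = Set.range (toPermHom G X)) : 2 ≤ k := by
  by_contra! hk1
  classical
  have := Fintype.ofFinite X
  have htrans (x y : X) : ∃ p ∈ Set.range (toPermHom G X), p x = y := by
    obtain ⟨g, hg⟩ := exists_smul_eq G x y
    exact ⟨toPermHom G X g, Set.mem_range_self g, hg⟩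
  have hsurj : Surjective (toPermHom G X) := fun p => by
    have hp : p ∈ kClosure (Set.range (toPermHom G X)) k := by
      rw [kClosure_eq_univ_of_le_one (Set.range_nonempty _) htrans (by omega : k ≤ 1)]
      trivial
    rwa [hk] at hp
  have : Nontrivial G := by
    obtain ⟨a, b, hab⟩ := hnonab
    exact nontrivial_of_ne _ _ hab
  have : Nontrivial X := by
    by_contra! hX
    obtain ⟨g, hg⟩ := exists_ne (1 : G)
    exact hg (toPerm_injective (α := G) (β := X) (Subsingleton.elim _ _))
  have : Nontrivial ℤˣ := nontrivial_of_ne (-1) 1 (by decide)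
  exact not_surjective_of_isSimpleGroup hnonab (Perm.sign.comp (toPermHom G X))
    ((Perm.sign_surjective X).comp hsurj)

variable {Ω : Type*} [MulAction G Ω]

lemma inducedPerms_orbit (x : Ω) :
    inducedPerms G (orbit G x) = Set.range (toPermHom G (orbit G x)) := by
  ext p
  simp only [inducedPerms, Set.mem_ofPred_eq, Set.mem_range, Perm.ext_iff, Subtype.ext_iff]
  exact exists_congr fun g => forall_congr' fun y => eq_comm

lemma exists_smul_eq_on_orbit_of_mem_kClosure {k : ℕ} (hk : 1 ≤ k) {x₀ : Ω}
    (hclosed : kClosure (Set.range (toPermHom G (orbit G x₀))) k =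
      Set.range (toPermHom G (orbit G x₀)))
    {g : Perm Ω} (hg : g ∈ kClosure (Set.range (toPermHom G Ω)) k) :
    ∃ c : G, ∀ y ∈ orbit G x₀, g y = c • y := by
  have hmem : ∀ y, g y ∈ orbit G x₀ ↔ y ∈ orbit G x₀ := fun y => by
    obtain ⟨_, ⟨h, rfl⟩, hh⟩ := hg fun _ => y
    rw [hh ⟨0, hk⟩, toPermHom_apply, toPerm_apply]
    exact ⟨fun hy => inv_smul_smul h y ▸ mem_orbit_of_mem_orbit h⁻¹ hy,
      mem_orbit_of_mem_orbit h⟩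
  have hrestr : g.subtypePerm hmem ∈ kClosure (Set.range (toPermHom G (orbit G x₀))) k :=
    fun f => by
      obtain ⟨_, ⟨h, rfl⟩, hh⟩ := hg (Subtype.val ∘ f)
      exact ⟨toPermHom G _ h, ⟨h, rfl⟩, fun i => Subtype.ext (hh i)⟩
  rw [hclosed] at hrestr
  obtain ⟨c, hc⟩ := hrestr
  exact ⟨c, fun y hy => congrArg Subtype.val (Perm.ext_iff.1 hc ⟨y, hy⟩).symm⟩

lemma apply_eq_smul_of_stabilizer_le {k : ℕ} (hk : 2 ≤ k) {g : Perm Ω}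
    (hg : g ∈ kClosure (Set.range (toPermHom G Ω)) k) {x y : Ω}
    (hxy : stabilizer G y ≤ stabilizer G x) {c : G} (hc : g y = c • y) : g x = c • x := by
  obtain ⟨_, ⟨h, rfl⟩, hh⟩ := hg fun i => if i.val = 0 then y else x
  have hy : g y = h • y := by simpa using hh ⟨0, by omega⟩
  have hx : g x = h • x := by simpa using hh ⟨1, by omega⟩
  have hstab : c⁻¹ * h ∈ stabilizer G x :=
    hxy (by rw [mem_stabilizer_iff, mul_smul, ← hy, hc, inv_smul_smul])
  rw [mem_stabilizer_iff, mul_smul, inv_smul_eq_iff] at hstab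
  rw [hx, hstab]

lemma stabilizer_le_of_injective_equivariant {S : Set Ω}
    (hS : ∀ (g : G), ∀ x ∈ S, g • x ∈ S) {e : S → Ω} (he : Injective e)
    (hequiv : ∀ (g : G) (x y : S), (y : Ω) = g • (x : Ω) → e y = g • e x) (x : S) :
    stabilizer G (e x) ≤ stabilizer G (x : Ω) := fun h hh =>
  congrArg Subtype.val
    (he ((hequiv h x ⟨h • x, hS h x x.2⟩ rfl).trans hh) : (⟨h • x, _⟩ : S) = x)

end Action

theorem kClosure_of_equivalent_orbits_general {G : Type*} [Group G] [Finite G]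
    (hnonab : ∃ a b : G, a * b ≠ b * a) (hsimple : IsSimpleGroup G)
    {Ω : Type*} [MulAction G Ω] (t : ℕ) (ht : 2 ≤ t) (Δ : Fin t → Set Ω)
    (horb : ∀ i, ∃ x : Ω, Δ i = MulAction.orbit G x)
    (hcover : ∀ x : Ω, ∃ i, x ∈ Δ i)
    (hequiv : ∀ i j, ∃ e : (Δ i) ≃ (Δ j), ∀ (g : G) (x y : Δ i),
      (y : Ω) = g • (x : Ω) → (e y : Ω) = g • (e x : Ω))
    (k : ℕ)
    (hfaith : ∀ i, ∀ g : G, (∀ x ∈ Δ i, g • x = x) → g = 1)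
    (hclosed : ∀ i, kClosure (inducedPerms G (Δ i)) k = inducedPerms G (Δ i)) :
    2 ≤ k ∧
    (∀ g : G, (∀ x : Ω, g • x = x) → g = 1) ∧
    kClosure (Set.range ⇑(MulAction.toPermHom G Ω)) k =
      Set.range ⇑(MulAction.toPermHom G Ω) := by
  have hinv : ∀ i (g : G), ∀ x ∈ Δ i, g • x ∈ Δ i := fun i g x hx => by
    obtain ⟨x₀, hx₀⟩ := horb i
    rw [hx₀] at hx ⊢
    exact mem_orbit_of_mem_orbit g hx
  let i₀ : Fin t := ⟨0, by omega⟩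
  obtain ⟨x₀, hx₀⟩ := horb i₀
  have hclosed₀ := hclosed i₀
  rw [hx₀, inducedPerms_orbit] at hclosed₀
  have : Finite (orbit G x₀) := (Finite.finite_mulAction_orbit x₀).to_subtype
  have : FaithfulSMul G (orbit G x₀) := faithfulSMul_iff.2 fun g hg =>
    hfaith i₀ g fun x hx => congrArg Subtype.val (hg ⟨x, hx₀ ▸ hx⟩)
  have hk : 2 ≤ k := two_le_of_kClosure_range_toPermHom_eq hnonab hclosed₀
  refine ⟨hk, fun g hg => hfaith i₀ g fun x _ => hg x, (subset_kClosure _ _).antisymm' ?_⟩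
  intro g hg
  obtain ⟨c, hc⟩ := exists_smul_eq_on_orbit_of_mem_kClosure (by omega) hclosed₀ hg
  refine ⟨c, Perm.ext fun x => ?_⟩
  obtain ⟨i, hxi⟩ := hcover x
  obtain ⟨e, he⟩ := hequiv i i₀
  have hstab := stabilizer_le_of_injective_equivariant (hinv i)
    (Subtype.val_injective.comp e.injective) he ⟨x, hxi⟩
  exact (apply_eq_smul_of_stabilizer_le hk hg hstab (hc _ (hx₀ ▸ (e ⟨x, hxi⟩).2))).symm

/-- Let `G` be a finite nonabelian simple group acting on a set `Ω` with (pairwise distinct)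
orbits `Δ₁, …, Δ_t`, `t ≥ 2`, such that the actions of `G` on the orbits are pairwise
equivalent (there are `G`-equivariant bijections between the orbits). If for some positive
integer `k` and each `i`, the group `G` acts faithfully on `Δ_i` (so `G^{Δ_i} ≅ G`) and the
induced group `G^{Δ_i}` equals its own `k`-closure, then `k ≥ 2`, `G` acts faithfully on `Ω`
(so `G^Ω ≅ G`) and `G^Ω` equals its own `k`-closure. -/
theorem kClosure_of_equivalent_orbits {G : Type*} [Group G] [Finite G]
    (hnonab : ∃ a b : G, a * b ≠ b * a) (hsimple : IsSimpleGroup G)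
    {Ω : Type*} [MulAction G Ω] (t : ℕ) (ht : 2 ≤ t) (Δ : Fin t → Set Ω)
    (horb : ∀ i, ∃ x : Ω, Δ i = MulAction.orbit G x)
    (hcover : ∀ x : Ω, ∃ i, x ∈ Δ i)
    (hdist : Function.Injective Δ)
    (hequiv : ∀ i j, ∃ e : (Δ i) ≃ (Δ j), ∀ (g : G) (x y : Δ i),
      (y : Ω) = g • (x : Ω) → (e y : Ω) = g • (e x : Ω))
    (k : ℕ) (hk : 1 ≤ k)
    (hfaith : ∀ i, ∀ g : G, (∀ x ∈ Δ i, g • x = x) → g = 1)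
    (hclosed : ∀ i, kClosure (inducedPerms G (Δ i)) k = inducedPerms G (Δ i)) :
    2 ≤ k ∧
    (∀ g : G, (∀ x : Ω, g • x = x) → g = 1) ∧
    kClosure (Set.range ⇑(MulAction.toPermHom G Ω)) k =
      Set.range ⇑(MulAction.toPermHom G Ω) :=
  kClosure_of_equivalent_orbits_general hnonab hsimple t ht Δ horb hcover hequiv k hfaith hclosed
end

section
/- Let G be a group acting transitively on a set Ω, let 𝓑 be a nontrivial G-invariant partition of Ω (𝓑 ≠ {Ω} and 𝓑 is not the partition into singletons), and let k be an integer with 2 ≤ k ≤ |𝓑|. Then 𝓑 is invariant under the k-closure G^{(k),Ω}: every g ∈ G^{(k),Ω} permutes the parts of 𝓑. -/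
section

variable {Ω : Type*}

theorem kClosure_anti {S : Set (Equiv.Perm Ω)} {m k : ℕ} (hm : 0 < m) (hmk : m ≤ k) :
    kClosure S k ⊆ kClosure S m := by
  intro g hg f
  obtain ⟨h, hS, hgh⟩ := hg fun i => f ⟨min i (m - 1), by omega⟩
  refine ⟨h, hS, fun i => ?_⟩
  have hi : min (i : ℕ) (m - 1) = i := min_eq_left (by omega)
  simpa [hi] using hgh (Fin.castLE hmk i)

theorem mem_kClosure_two {S : Set (Equiv.Perm Ω)} {g : Equiv.Perm Ω} :
    g ∈ kClosure S 2 ↔ ∀ x y, ∃ h ∈ S, g x = h x ∧ g y = h y := by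
  refine ⟨fun hg x y => ?_, fun hg f => ?_⟩
  · obtain ⟨h, hS, hgh⟩ := hg ![x, y]
    exact ⟨h, hS, hgh 0, hgh 1⟩
  · obtain ⟨h, hS, h0, h1⟩ := hg (f 0) (f 1)
    exact ⟨h, hS, Fin.forall_fin_two.2 ⟨h0, h1⟩⟩

namespace Setoid

variable (r : Setoid Ω) {σ : Equiv.Perm Ω}

theorem rel_apply_of_image_mem_classes (hσ : ∀ B ∈ r.classes, σ '' B ∈ r.classes) {x y : Ω}
    (hxy : r x y) : r (σ x) (σ y) := by
  obtain ⟨B, hB, hx, hy⟩ := r.rel_iff_exists_classes.1 hxy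
  exact r.rel_iff_exists_classes.2
    ⟨σ '' B, hσ B hB, Set.mem_image_of_mem σ hx, Set.mem_image_of_mem σ hy⟩

theorem image_mem_classes_of_rel_apply_iff (hσ : ∀ x y, r (σ x) (σ y) ↔ r x y) :
    ∀ B ∈ r.classes, σ '' B ∈ r.classes := by
  rintro _ ⟨y, rfl⟩
  refine ⟨σ y, Set.ext fun z => ?_⟩
  rw [σ.image_eq_preimage_symm, Set.mem_preimage, Set.mem_ofPred_eq, Set.mem_ofPred_eq,
    ← hσ, σ.apply_symm_apply]

theorem rel_apply_iff_of_mem_subgroup {G : Subgroup (Equiv.Perm Ω)}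
    (hG : ∀ h ∈ G, ∀ B ∈ r.classes, (h : Equiv.Perm Ω) '' B ∈ r.classes) (hσ : σ ∈ G) (x y : Ω) :
    r (σ x) (σ y) ↔ r x y := by
  refine ⟨fun hxy => ?_, r.rel_apply_of_image_mem_classes (hG σ hσ)⟩
  simpa using r.rel_apply_of_image_mem_classes (hG σ⁻¹ (inv_mem hσ)) hxy

theorem image_mem_classes_of_mem_kClosure_two {G : Subgroup (Equiv.Perm Ω)}
    (hG : ∀ h ∈ G, ∀ B ∈ r.classes, (h : Equiv.Perm Ω) '' B ∈ r.classes)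
    (hσ : σ ∈ kClosure (G : Set (Equiv.Perm Ω)) 2) : ∀ B ∈ r.classes, σ '' B ∈ r.classes := by
  refine r.image_mem_classes_of_rel_apply_iff fun x y => ?_
  obtain ⟨h, hh, hx, hy⟩ := mem_kClosure_two.1 hσ x y
  rw [hx, hy]
  exact r.rel_apply_iff_of_mem_subgroup hG hh x y

end Setoid

end

theorem kClosure_preserves_partition_general {Ω : Type*} (G : Subgroup (Equiv.Perm Ω))
    (𝓑 : Set (Set Ω)) (hpart : Setoid.IsPartition 𝓑)
    (hinv : ∀ g ∈ G, ∀ B ∈ 𝓑, (g : Equiv.Perm Ω) '' B ∈ 𝓑)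
    (k : ℕ) (hk2 : 2 ≤ k) :
    ∀ g ∈ kClosure (G : Set (Equiv.Perm Ω)) k, ∀ B ∈ 𝓑, g '' B ∈ 𝓑 := by
  intro g hg
  rw [← Setoid.classes_mkClasses 𝓑 hpart] at hinv ⊢
  exact Setoid.image_mem_classes_of_mem_kClosure_two _ hinv (kClosure_anti two_pos hk2 hg)

/-- Let `G ≤ Sym(Ω)` be transitive, let `𝓑` be a nontrivial `G`-invariant partition of `Ω`
(not `{Ω}` and not the partition into singletons), and let `2 ≤ k ≤ |𝓑|`. Then `𝓑` is
invariant under the `k`-closure `G^{(k),Ω}`: every element of `G^{(k),Ω}` permutes the parts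
of `𝓑`. -/
theorem kClosure_preserves_partition {Ω : Type*} (G : Subgroup (Equiv.Perm Ω))
    (htrans : ∀ x y : Ω, ∃ g ∈ G, g x = y)
    (𝓑 : Set (Set Ω)) (hpart : Setoid.IsPartition 𝓑)
    (hne_univ : 𝓑 ≠ {Set.univ})
    (hne_singletons : ¬ ∀ B ∈ 𝓑, ∃ x : Ω, B = {x})
    (hinv : ∀ g ∈ G, ∀ B ∈ 𝓑, (g : Equiv.Perm Ω) '' B ∈ 𝓑)
    (k : ℕ) (hk2 : 2 ≤ k) (hk𝓑 : (k : Cardinal) ≤ Cardinal.mk 𝓑) :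
    ∀ g ∈ kClosure (G : Set (Equiv.Perm Ω)) k, ∀ B ∈ 𝓑, g '' B ∈ 𝓑 :=
  kClosure_preserves_partition_general G 𝓑 hpart hinv k hk2
end

section
/- Let G be a group acting transitively on a set Ω, let 𝓑 be a nontrivial G-invariant partition of Ω, and let k be an integer with 2 ≤ k ≤ |𝓑|. Then the permutation group on 𝓑 induced by the k-closure G^{(k),Ω} is contained in the k-closure of the permutation group induced by G on 𝓑: (G^{(k),Ω})^𝓑 ≤ (G^𝓑)^{(k),𝓑}. -/
/-- The permutation group induced on the parts of a partition `𝓑` of `Ω` by a set `S` of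
permutations of `Ω` (each of which permutes the parts of `𝓑`). -/
def inducedOnParts {Ω : Type*} (𝓑 : Set (Set Ω)) (S : Set (Equiv.Perm Ω)) :
    Set (Equiv.Perm 𝓑) :=
  {P | ∃ g ∈ S, ∀ B : 𝓑, (P B : Set Ω) = g '' (B : Set Ω)}

section InducedOnParts

variable {Ω : Type*} {𝓑 : Set (Set Ω)}

theorem Setoid.IsPartition.part_eq_of_mem (hpart : Setoid.IsPartition 𝓑) {B C : 𝓑} {x : Ω}
    (hB : x ∈ (B : Set Ω)) (hC : x ∈ (C : Set Ω)) : B = C :=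
  Subtype.ext (Setoid.eq_of_mem_eqv_class hpart.2 B.2 hB C.2 hC)

theorem Setoid.IsPartition.apply_eq_of_induced_of_apply_eq (hpart : Setoid.IsPartition 𝓑)
    {P Q : Equiv.Perm 𝓑} {g h : Equiv.Perm Ω}
    (hP : ∀ B : 𝓑, (P B : Set Ω) = g '' B) (hQ : ∀ B : 𝓑, (Q B : Set Ω) = h '' B)
    {B : 𝓑} {x : Ω} (hx : x ∈ (B : Set Ω)) (hgh : g x = h x) : P B = Q B :=
  hpart.part_eq_of_mem (x := g x) (hP B ▸ Set.mem_image_of_mem g hx)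
    (hQ B ▸ hgh ▸ Set.mem_image_of_mem h hx)

def Subgroup.permOnParts (G : Subgroup (Equiv.Perm Ω))
    (hinv : ∀ g ∈ G, ∀ B ∈ 𝓑, (g : Equiv.Perm Ω) '' B ∈ 𝓑) (g : G) : Equiv.Perm 𝓑 where
  toFun B := ⟨(g : Equiv.Perm Ω) '' B, hinv g g.2 B B.2⟩
  invFun B := ⟨(g⁻¹ : Equiv.Perm Ω) '' B, hinv g⁻¹ (G.inv_mem g.2) B B.2⟩
  left_inv B := Subtype.ext (by simp [Set.image_image])
  right_inv B := Subtype.ext (by simp [Set.image_image])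

theorem Subgroup.permOnParts_mem_inducedOnParts (G : Subgroup (Equiv.Perm Ω))
    (hinv : ∀ g ∈ G, ∀ B ∈ 𝓑, (g : Equiv.Perm Ω) '' B ∈ 𝓑) (g : G) :
    G.permOnParts hinv g ∈ inducedOnParts 𝓑 (G : Set (Equiv.Perm Ω)) :=
  ⟨g, g.2, fun _ => rfl⟩

end InducedOnParts

theorem inducedOnParts_kClosure_le_general {Ω : Type*} (G : Subgroup (Equiv.Perm Ω))
    (𝓑 : Set (Set Ω)) (hpart : Setoid.IsPartition 𝓑)
    (hinv : ∀ g ∈ G, ∀ B ∈ 𝓑, (g : Equiv.Perm Ω) '' B ∈ 𝓑)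
    (k : ℕ) :
    inducedOnParts 𝓑 (kClosure (G : Set (Equiv.Perm Ω)) k) ⊆
      kClosure (inducedOnParts 𝓑 (G : Set (Equiv.Perm Ω))) k := by
  rintro P ⟨g, hg, hPg⟩ f
  choose x hx using fun i => Setoid.nonempty_of_mem_partition hpart (f i).2
  obtain ⟨h, hhG, hgh⟩ := hg x
  exact ⟨G.permOnParts hinv ⟨h, hhG⟩, G.permOnParts_mem_inducedOnParts hinv _,
    fun i => hpart.apply_eq_of_induced_of_apply_eq hPg (fun _ => rfl) (hx i) (hgh i)⟩

/-- Let `G ≤ Sym(Ω)` be transitive, let `𝓑` be a nontrivial `G`-invariant partition of `Ω`,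
and let `2 ≤ k ≤ |𝓑|`. Then the permutation group induced on `𝓑` by the `k`-closure
`G^{(k),Ω}` is contained in the `k`-closure of the permutation group induced on `𝓑`
by `G`. -/
theorem inducedOnParts_kClosure_le {Ω : Type*} (G : Subgroup (Equiv.Perm Ω))
    (htrans : ∀ x y : Ω, ∃ g ∈ G, g x = y)
    (𝓑 : Set (Set Ω)) (hpart : Setoid.IsPartition 𝓑)
    (hne_univ : 𝓑 ≠ {Set.univ})
    (hne_singletons : ¬ ∀ B ∈ 𝓑, ∃ x : Ω, B = {x})
    (hinv : ∀ g ∈ G, ∀ B ∈ 𝓑, (g : Equiv.Perm Ω) '' B ∈ 𝓑)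
    (k : ℕ) (hk2 : 2 ≤ k) (hk𝓑 : (k : Cardinal) ≤ Cardinal.mk 𝓑) :
    inducedOnParts 𝓑 (kClosure (G : Set (Equiv.Perm Ω)) k) ⊆
      kClosure (inducedOnParts 𝓑 (G : Set (Equiv.Perm Ω))) k :=
  inducedOnParts_kClosure_le_general G 𝓑 hpart hinv k
end

section
/- Let G be a group acting transitively on a set Ω, let 𝓑 be a nontrivial G-invariant partition of Ω, let k be an integer with 2 ≤ k ≤ |𝓑|, and let B ∈ 𝓑. Then the permutation group on B induced by the setwise stabiliser of B in the k-closure G^{(k),Ω} is contained in the k-closure on B of the permutation group induced on B by the setwise stabiliser G_B: ((G^{(k),Ω})_B)^B ≤ ((G_B)^B)^{(k),B}. -/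
/-- The permutation group induced on a subset `B ⊆ Ω` by the setwise stabiliser of `B` in a
set `S` of permutations of `Ω`. -/
def stabiliserInducedOn {Ω : Type*} (S : Set (Equiv.Perm Ω)) (B : Set Ω) :
    Set (Equiv.Perm B) :=
  {p | ∃ g ∈ S, (g : Equiv.Perm Ω) '' B = B ∧ ∀ x : B, (p x : Ω) = g x}

/-!
Take `p` induced on `B` by some `g ∈ G^{(k)}` stabilising `B`, and a `k`-tuple in `B`. Some
`h ∈ G` agrees with `g` on the tuple. Since `h` permutes the blocks and sends a point of `B`
into `B`, it stabilises `B`, so its restriction to `B` lies in `(G_B)^B` and agrees with `p`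
on the tuple. (For `k = 0` the identity is a witness.)
-/

theorem Setoid.IsPartition.image_eq_of_apply_mem {Ω : Type*} {𝓑 : Set (Set Ω)}
    (hpart : Setoid.IsPartition 𝓑) {B : Set Ω} (hB : B ∈ 𝓑) {f : Ω → Ω} (hfB : f '' B ∈ 𝓑)
    {x : Ω} (hx : x ∈ B) (hfx : f x ∈ B) : f '' B = B :=
  Setoid.eq_of_mem_eqv_class hpart.2 hfB (Set.mem_image_of_mem f hx) hB hfx

theorem Equiv.Perm.apply_mem_iff_of_image_eq {Ω : Type*} {g : Equiv.Perm Ω} {B : Set Ω}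
    (hgB : g '' B = B) (x : Ω) : g x ∈ B ↔ x ∈ B := by
  have hpre : g ⁻¹' B = B := by
    conv_lhs => rw [← hgB]
    exact Set.preimage_image_eq B g.injective
  exact Set.ext_iff.mp hpre x

theorem subtypePerm_mem_stabiliserInducedOn {Ω : Type*} {S : Set (Equiv.Perm Ω)} {B : Set Ω}
    {g : Equiv.Perm Ω} (hg : g ∈ S) (hgB : g '' B = B) :
    g.subtypePerm (Equiv.Perm.apply_mem_iff_of_image_eq hgB) ∈ stabiliserInducedOn S B :=
  ⟨g, hg, hgB, fun _ => rfl⟩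

theorem stabiliser_kClosure_le_general {Ω : Type*} (G : Subgroup (Equiv.Perm Ω))
    (𝓑 : Set (Set Ω)) (hpart : Setoid.IsPartition 𝓑)
    (hinv : ∀ g ∈ G, ∀ B ∈ 𝓑, (g : Equiv.Perm Ω) '' B ∈ 𝓑)
    (k : ℕ)
    (B : Set Ω) (hB : B ∈ 𝓑) :
    stabiliserInducedOn (kClosure (G : Set (Equiv.Perm Ω)) k) B ⊆
      kClosure (stabiliserInducedOn (G : Set (Equiv.Perm Ω)) B) k := by
  rintro p ⟨g, hg, hgB, hpg⟩ f
  obtain ⟨h, hhG, hhB, hgh⟩ :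
      ∃ h ∈ G, (h : Equiv.Perm Ω) '' B = B ∧ ∀ i, g (f i) = h (f i) := by
    rcases k.eq_zero_or_pos with rfl | hk
    · exact ⟨1, G.one_mem, by simp, finZeroElim⟩
    obtain ⟨h, hhG, hgh⟩ := hg (fun i => (f i : Ω))
    have hf₀ : h (f ⟨0, hk⟩) ∈ B := by
      rw [← hgh, Equiv.Perm.apply_mem_iff_of_image_eq hgB]
      exact (f ⟨0, hk⟩).2
    exact ⟨h, hhG, hpart.image_eq_of_apply_mem hB (hinv h hhG B hB) (f ⟨0, hk⟩).2 hf₀, hgh⟩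
  refine ⟨_, subtypePerm_mem_stabiliserInducedOn hhG hhB, fun i => Subtype.ext ?_⟩
  rw [hpg]
  exact hgh i

/-- Let `G ≤ Sym(Ω)` be transitive, let `𝓑` be a nontrivial `G`-invariant partition of `Ω`,
let `2 ≤ k ≤ |𝓑|`, and let `B ∈ 𝓑`. Then the permutation group induced on `B` by the
setwise stabiliser of `B` in the `k`-closure `G^{(k),Ω}` is contained in the `k`-closure on
`B` of the permutation group induced on `B` by the setwise stabiliser `G_B`. -/
theorem stabiliser_kClosure_le {Ω : Type*} (G : Subgroup (Equiv.Perm Ω))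
    (htrans : ∀ x y : Ω, ∃ g ∈ G, g x = y)
    (𝓑 : Set (Set Ω)) (hpart : Setoid.IsPartition 𝓑)
    (hne_univ : 𝓑 ≠ {Set.univ})
    (hne_singletons : ¬ ∀ B ∈ 𝓑, ∃ x : Ω, B = {x})
    (hinv : ∀ g ∈ G, ∀ B ∈ 𝓑, (g : Equiv.Perm Ω) '' B ∈ 𝓑)
    (k : ℕ) (hk2 : 2 ≤ k) (hk𝓑 : (k : Cardinal) ≤ Cardinal.mk 𝓑)
    (B : Set Ω) (hB : B ∈ 𝓑) :
    stabiliserInducedOn (kClosure (G : Set (Equiv.Perm Ω)) k) B ⊆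
      kClosure (stabiliserInducedOn (G : Set (Equiv.Perm Ω)) B) k :=
  stabiliser_kClosure_le_general G 𝓑 hpart hinv k B hB
end

section
/- Let G be a group acting transitively on a set Ω, let 𝓑 be a nontrivial G-invariant partition of Ω, and let k be an integer with 2 ≤ k ≤ |𝓑|. If there exist parts B₁,…,B_k ∈ 𝓑 whose joint setwise stabiliser in G is trivial (G_{B₁,…,B_k} = 1), then the k-closure G^{(k),Ω} acts faithfully on 𝓑: the only element of G^{(k),Ω} fixing every part of 𝓑 setwise is the identity. -/
namespace Equiv.Perm

variable {Ω : Type*}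

theorem image_conj_eq_iff (t h : Perm Ω) (B : Set Ω) :
    (t⁻¹ * h * t) '' B = B ↔ h '' (t '' B) = t '' B := by
  rw [coe_mul, coe_mul, Set.image_comp, Set.image_comp, ← t.image_eq_iff_eq, ← Set.image_comp,
    ← coe_mul, mul_inv_cancel, coe_one, Set.image_id]

theorem eq_one_of_image_image_eq {ι : Type*} {G : Subgroup (Perm Ω)} {Bs : ι → Set Ω}
    (hstab : ∀ g ∈ G, (∀ i, g '' Bs i = Bs i) → g = 1) {t : Perm Ω} (ht : t ∈ G) :
    ∀ h ∈ G, (∀ i, h '' (t '' Bs i) = t '' Bs i) → h = 1 := by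
  intro h hh hfix
  have hconj : t⁻¹ * h * t = 1 :=
    hstab _ (mul_mem (mul_mem (inv_mem ht) hh) ht) fun i => (image_conj_eq_iff t h _).2 (hfix i)
  simpa using (conj_eq_one_iff (a := t⁻¹)).1 (by simpa using hconj)

theorem image_eq_of_apply_eq {𝓑 : Set (Set Ω)} (hpart : Setoid.IsPartition 𝓑) {g h : Perm Ω}
    {B : Set Ω} (hB : B ∈ 𝓑) (hgB : g '' B = B) (hhB : h '' B ∈ 𝓑) {a : Ω} (ha : a ∈ B)
    (hgh : g a = h a) : h '' B = B :=
  Setoid.eq_of_mem_eqv_class hpart.2 hhB ⟨a, ha, hgh.symm⟩ hB (hgB ▸ Set.mem_image_of_mem g ha)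

end Equiv.Perm

theorem exists_mem_image_eq_of_mem_kClosure {Ω : Type*} {G : Subgroup (Equiv.Perm Ω)}
    {𝓑 : Set (Set Ω)} (hpart : Setoid.IsPartition 𝓑)
    (hinv : ∀ g ∈ G, ∀ B ∈ 𝓑, (g : Equiv.Perm Ω) '' B ∈ 𝓑) {k : ℕ} {g : Equiv.Perm Ω}
    (hg : g ∈ kClosure (G : Set (Equiv.Perm Ω)) k) (hfix : ∀ B ∈ 𝓑, g '' B = B)
    {f : Fin k → Ω} {Cs : Fin k → Set Ω} (hCs : ∀ i, Cs i ∈ 𝓑) (hf : ∀ i, f i ∈ Cs i) :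
    ∃ h ∈ G, (∀ i, g (f i) = h (f i)) ∧ ∀ i, h '' Cs i = Cs i := by
  obtain ⟨h, hh, hgh⟩ := hg f
  exact ⟨h, hh, hgh, fun i => Equiv.Perm.image_eq_of_apply_eq hpart (hCs i) (hfix _ (hCs i))
    (hinv h hh _ (hCs i)) (hf i) (hgh i)⟩

theorem kClosure_faithful_on_parts_general {Ω : Type*} (G : Subgroup (Equiv.Perm Ω))
    (htrans : ∀ x y : Ω, ∃ g ∈ G, g x = y)
    (𝓑 : Set (Set Ω)) (hpart : Setoid.IsPartition 𝓑)
    (hinv : ∀ g ∈ G, ∀ B ∈ 𝓑, (g : Equiv.Perm Ω) '' B ∈ 𝓑)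
    (k : ℕ) (hk2 : 2 ≤ k)
    (Bs : Fin k → Set Ω) (hBs : ∀ i, Bs i ∈ 𝓑)
    (hstab : ∀ g ∈ G, (∀ i, (g : Equiv.Perm Ω) '' Bs i = Bs i) → g = 1) :
    ∀ g ∈ kClosure (G : Set (Equiv.Perm Ω)) k, (∀ B ∈ 𝓑, g '' B = B) → g = 1 := by
  intro g hg hfix
  have hk0 : 0 < k := by omega
  choose x hx using fun i => Setoid.nonempty_of_mem_partition hpart (hBs i)
  ext α
  obtain ⟨t, ht, rfl⟩ := htrans (x ⟨0, hk0⟩) α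
  obtain ⟨h, hh, hgh, hhC⟩ := exists_mem_image_eq_of_mem_kClosure hpart hinv hg hfix
    (fun i => hinv t ht _ (hBs i)) fun i => Set.mem_image_of_mem t (hx i)
  have h1 : h = 1 := Equiv.Perm.eq_one_of_image_image_eq hstab ht h hh hhC
  simpa [h1] using hgh ⟨0, hk0⟩

/-- Let `G ≤ Sym(Ω)` be transitive, let `𝓑` be a nontrivial `G`-invariant partition of `Ω`,
and let `2 ≤ k ≤ |𝓑|`. If there exist parts `B₁, …, B_k ∈ 𝓑` whose joint setwise stabiliser
in `G` is trivial, then the `k`-closure `G^{(k),Ω}` acts faithfully on `𝓑`: the only element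
of `G^{(k),Ω}` fixing every part of `𝓑` setwise is the identity. -/
theorem kClosure_faithful_on_parts {Ω : Type*} (G : Subgroup (Equiv.Perm Ω))
    (htrans : ∀ x y : Ω, ∃ g ∈ G, g x = y)
    (𝓑 : Set (Set Ω)) (hpart : Setoid.IsPartition 𝓑)
    (hne_univ : 𝓑 ≠ {Set.univ})
    (hne_singletons : ¬ ∀ B ∈ 𝓑, ∃ x : Ω, B = {x})
    (hinv : ∀ g ∈ G, ∀ B ∈ 𝓑, (g : Equiv.Perm Ω) '' B ∈ 𝓑)
    (k : ℕ) (hk2 : 2 ≤ k) (hk𝓑 : (k : Cardinal) ≤ Cardinal.mk 𝓑)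
    (Bs : Fin k → Set Ω) (hBs : ∀ i, Bs i ∈ 𝓑)
    (hstab : ∀ g ∈ G, (∀ i, (g : Equiv.Perm Ω) '' Bs i = Bs i) → g = 1) :
    ∀ g ∈ kClosure (G : Set (Equiv.Perm Ω)) k, (∀ B ∈ 𝓑, g '' B = B) → g = 1 :=
  kClosure_faithful_on_parts_general G htrans 𝓑 hpart hinv k hk2 Bs hBs hstab
end

section
/- Let n ≥ 5, write n = 3m + δ with δ ∈ {0,1,2}, let k be an integer with 2 ≤ k ≤ n/2, and let G be A_n or S_n acting on the set Ω of k-element subsets of {1,…,n}. Then the base size satisfies b(G^Ω) ≤ 2m if δ ∈ {0,1} and b(G^Ω) ≤ 2m + 1 if δ = 2; in particular b(G^Ω) ≤ 2n/3. Moreover b(G^Ω) ≤ n − 2, with equality if and only if (n, k, G) = (6, 2, S_6) or (5, 2, S_5). -/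
/-!
Cut `{1, …, n}` into `m` triples `{a_t, b_t, c_t}` and `δ` leftover points, and attach to each
triple the two `k`-sets `{a_t, c_t} ∪ P_t` and `{b_t, c_t} ∪ P_t`, where the padding `P_t`
consists of `k - 2` points `a_s`, `b_s` of other triples. Only `a_t` lies in the first set of its
triple but not in the second, and only `b_t` the other way round; every other member of the first
set is `c_t` or some `a_s`, `b_s`, so `c_t` is pinned down as well. Hence these `2m` sets separate
all points but the leftovers, and for `δ = 2` one more set separates the two leftovers. A
separating family is a base for every subgroup of `S_n`, which gives the upper bounds.

Conversely a base of `S_n` must separate points, since otherwise a transposition fixes every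
set. Two sets separate at most `4 < 5` points; three `2`-sets have total size `6`, while six
points need six distinct membership patterns, i.e. subsets of a `3`-set, of total size at least
`7`. So the bound `n - 2` is attained for `S_5` and `S_6` with `k = 2`, while `A_5`, `A_6` (where
a base only has to separate all but two points, a transposition being odd) and `k = 3, n = 6`
have explicit smaller bases.
-/

/-- The base size of a permutation group `G ≤ Sym(n)` in its action on the `k`-element
subsets of `{1, …, n}` (with the induced group required to be faithful on the subsets):
the least size of a tuple of `k`-subsets whose pointwise stabiliser in `G` is trivial. -/
noncomputable def subsetsBaseSize (n k : ℕ) (G : Subgroup (Equiv.Perm (Fin n))) : ℕ :=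
  sInf {c : ℕ | ∃ f : Fin c → {s : Finset (Fin n) // s.card = k},
    ∀ g ∈ G, (∀ i, Finset.image (⇑g) (f i).1 = (f i).1) → g = 1}

open Finset Equiv

variable {ι α : Type*}

def Twins (f : ι → Finset α) (x y : α) : Prop := ∀ i, x ∈ f i ↔ y ∈ f i

def Separating (f : ι → Finset α) : Prop := ∀ x y, Twins f x y → x = y

instance [Fintype ι] [Fintype α] [DecidableEq α] (f : ι → Finset α) :
    Decidable (Separating f) :=
  inferInstanceAs (Decidable (∀ x y, (∀ i, x ∈ f i ↔ y ∈ f i) → x = y))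

lemma Twins.symm {f : ι → Finset α} {x y : α} (h : Twins f x y) : Twins f y x :=
  fun i => (h i).symm

lemma Separating.of_range_subset {κ : Type*} {f : ι → Finset α} {f' : κ → Finset α}
    (h : Set.range f ⊆ Set.range f') (hf : Separating f) : Separating f' := by
  intro x y hxy
  refine hf x y fun i => ?_
  obtain ⟨j, hj⟩ := h ⟨i, rfl⟩
  rw [← hj]
  exact hxy j

section Perm

variable [DecidableEq α] {f : ι → Finset α} {g : Perm α}

lemma twins_apply_of_image_eq (hg : ∀ i, (f i).image g = f i) (x : α) : Twins f (g x) x :=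
  fun i => by rw [← g.injective.mem_finset_image (a := x), hg i]

lemma eq_one_of_separating (hf : Separating f) (hg : ∀ i, (f i).image g = f i) : g = 1 :=
  Equiv.ext fun x => hf _ _ (twins_apply_of_image_eq hg x)

lemma image_swap_eq {s : Finset α} {x y : α} (h : x ∈ s ↔ y ∈ s) :
    s.image (swap x y) = s := by
  ext z
  simp only [mem_image, swap_apply_eq_iff, exists_eq_right]
  rw [swap_apply_def]
  split_ifs <;> simp_all

lemma separating_of_forall_image_eq (hf : ∀ g : Perm α, (∀ i, (f i).image g = f i) → g = 1) :
    Separating f := by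
  intro x y hxy
  by_contra hne
  exact hne (swap_eq_one_iff.mp (hf _ fun i => image_swap_eq (hxy i)))

lemma eq_one_of_mem_alternatingGroup_of_support_subset [Fintype α] {a b : α}
    (hg : g ∈ alternatingGroup α) (h : g.support ⊆ {a, b}) : g = 1 := by
  have hcard : #g.support ≤ 2 := (card_le_card h).trans card_le_two
  interval_cases hc : #g.support
  · exact Perm.support_eq_empty_iff.mp (card_eq_zero.mp hc)
  · exact absurd hc g.card_support_ne_one
  · have := (Perm.card_support_eq_two.mp hc).sign_eq
    rw [Perm.mem_alternatingGroup.mp hg] at this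
    exact absurd this (by decide)

lemma eq_one_of_mem_alternatingGroup_of_twins [Fintype α] {a b : α}
    (hf : ∀ x y, x ≠ a → x ≠ b → Twins f x y → x = y)
    (hg : g ∈ alternatingGroup α) (himg : ∀ i, (f i).image g = f i) : g = 1 := by
  refine eq_one_of_mem_alternatingGroup_of_support_subset (a := a) (b := b) hg fun x hx => ?_
  by_contra hab
  simp only [mem_insert, mem_singleton, not_or] at hab
  exact Perm.mem_support.mp hx (hf x (g x) hab.1 hab.2 (twins_apply_of_image_eq himg x).symm).symm

end Perm

section Counting

variable [Fintype ι] [DecidableEq α] {f : ι → Finset α}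

lemma Separating.injective (hf : Separating f) :
    Function.Injective fun x => ({i | x ∈ f i} : Finset ι) :=
  fun x y hxy => hf x y fun i => by simpa using congrArg (i ∈ ·) hxy

lemma Separating.card_le_two_pow [Fintype α] (hf : Separating f) :
    Fintype.card α ≤ 2 ^ Fintype.card ι := by
  simpa using Fintype.card_le_of_injective _ hf.injective

lemma sum_card_filter_mem [Fintype α] (f : ι → Finset α) :
    ∑ x, #{i | x ∈ f i} = ∑ i, #(f i) := by
  simpa [bipartiteAbove, bipartiteBelow] using
    sum_card_bipartiteAbove_eq_sum_card_bipartiteBelow (s := univ) (t := univ)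
      (r := fun x i => x ∈ f i)

end Counting

set_option maxRecDepth 10000 in
lemma six_lt_sum_card_of_card_eq_six :
    ∀ S : Finset (Finset (Fin 3)), #S = 6 → 6 < ∑ s ∈ S, #s := by
  decide

lemma not_separating_of_card_eq_two (f : Fin 3 → Finset (Fin 6)) (hf : ∀ i, #(f i) = 2) :
    ¬ Separating f := by
  intro hsep
  set S := univ.image fun x => ({i | x ∈ f i} : Finset (Fin 3))
  have hS : #S = 6 := by rw [card_image_of_injective _ hsep.injective]; rfl
  have hsum : ∑ s ∈ S, #s = 6 := by
    rw [sum_image fun x _ y _ h => hsep.injective h, sum_card_filter_mem]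
    simp [hf]
  exact (six_lt_sum_card_of_card_eq_six S hS).ne' hsum

section BaseSize

variable {n k : ℕ}

lemma exists_fin_base [Fintype ι] {G : Subgroup (Perm (Fin n))} (f : ι → Finset (Fin n))
    (hcard : ∀ i, #(f i) = k) (hbase : ∀ g ∈ G, (∀ i, (f i).image g = f i) → g = 1) :
    ∃ f' : Fin (Fintype.card ι) → {s : Finset (Fin n) // #s = k},
      ∀ g ∈ G, (∀ i, (f' i).1.image g = (f' i).1) → g = 1 := by
  let e := Fintype.equivFin ι
  refine ⟨fun j => ⟨f (e.symm j), hcard _⟩, fun g hg himg => hbase g hg fun i => ?_⟩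
  simpa using himg (e i)

lemma exists_fin_base_subsetsBaseSize {G : Subgroup (Perm (Fin n))} {c : ℕ}
    (h : ∃ f : Fin c → {s : Finset (Fin n) // #s = k},
      ∀ g ∈ G, (∀ i, (f i).1.image g = (f i).1) → g = 1) :
    ∃ f : Fin (subsetsBaseSize n k G) → {s : Finset (Fin n) // #s = k},
      ∀ g ∈ G, (∀ i, (f i).1.image g = (f i).1) → g = 1 :=
  Nat.sInf_mem (s := {c | ∃ f : Fin c → {s : Finset (Fin n) // #s = k},
    ∀ g ∈ G, (∀ i, (f i).1.image g = (f i).1) → g = 1}) ⟨c, h⟩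

lemma subsetsBaseSize_le_card [Fintype ι] {G : Subgroup (Perm (Fin n))} (f : ι → Finset (Fin n))
    (hcard : ∀ i, #(f i) = k) (hbase : ∀ g ∈ G, (∀ i, (f i).image g = f i) → g = 1) :
    subsetsBaseSize n k G ≤ Fintype.card ι :=
  Nat.sInf_le (exists_fin_base f hcard hbase)

lemma subsetsBaseSize_top_eq {c : ℕ} (f : Fin (c + 1) → Finset (Fin n))
    (hcard : ∀ i, #(f i) = k) (hf : Separating f)
    (hmin : ∀ f' : Fin c → Finset (Fin n), (∀ i, #(f' i) = k) → ¬ Separating f') :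
    subsetsBaseSize n k ⊤ = c + 1 := by
  have hbase := exists_fin_base (G := ⊤) f hcard fun g _ => eq_one_of_separating hf
  rw [Fintype.card_fin] at hbase
  refine le_antisymm (Nat.sInf_le hbase) (not_lt.mp fun hlt => ?_)
  obtain ⟨f', hf'⟩ := exists_fin_base_subsetsBaseSize hbase
  -- pad the smaller base with copies of `f 0`
  let f'' : Fin c → Finset (Fin n) := fun j =>
    if h : j.val < subsetsBaseSize n k ⊤ then (f' ⟨j, h⟩).1 else f 0
  refine hmin f'' (fun j => by unfold f''; split_ifs; exacts [(f' _).2, hcard 0]) ?_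
  have hsep' := separating_of_forall_image_eq fun g hg => hf' g (Subgroup.mem_top g) hg
  refine hsep'.of_range_subset ?_
  rintro _ ⟨j, rfl⟩
  exact ⟨⟨j, by omega⟩, dif_pos j.2⟩

end BaseSize

section Triples

variable {β : Type*}

def IsPadding (φ : β × Option Bool ↪ α) (P : β → Finset α) : Prop :=
  ∀ t, ∀ y ∈ P t, ∃ s ≠ t, ∃ b, φ (s, some b) = y

variable {φ : β × Option Bool ↪ α} {P : β → Finset α}

lemma IsPadding.apply_notMem (hP : IsPadding φ P) (t : β) (o : Option Bool) : φ (t, o) ∉ P t :=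
  fun h => by
    obtain ⟨s, hst, b, hs⟩ := hP t _ h
    exact hst (congrArg Prod.fst (φ.injective hs))

variable (φ) in
lemma exists_isPadding [Fintype β] {c : ℕ} (hc : c ≤ 2 * (Fintype.card β - 1)) :
    ∃ P : β → Finset α, IsPadding φ P ∧ ∀ t, #(P t) = c := by
  classical
  have key (t : β) :
      ∃ Q : Finset α, #Q = c ∧ ∀ y ∈ Q, ∃ s ≠ t, ∃ b, φ (s, some b) = y := by
    set D := ((univ.erase t) ×ˢ univ).image fun p : β × Bool => φ (p.1, some p.2)
    have hD : #D = (Fintype.card β - 1) * 2 := by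
      rw [card_image_of_injective, card_product, card_erase_of_mem (mem_univ t)]
      · simp
      · intro p q hpq
        simpa [φ.injective.eq_iff, Prod.ext_iff] using hpq
    obtain ⟨Q, hQ, hQc⟩ := exists_subset_card_eq (show c ≤ #D by omega)
    refine ⟨Q, hQc, fun y hy => ?_⟩
    obtain ⟨⟨s, b⟩, hs, rfl⟩ := mem_image.mp (hQ hy)
    exact ⟨s, (mem_erase.mp (mem_product.mp hs).1).1, b, rfl⟩
  choose P hPc hP using key
  exact ⟨P, hP, hPc⟩

variable [DecidableEq α]

-- `φ (t, some false)`, `φ (t, some true)` and `φ (t, none)` play the roles of `a_t`, `b_t`, `c_t`.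
variable (φ P) in
def tripleSet (i : β × Bool) : Finset α :=
  insert (φ (i.1, some i.2)) (insert (φ (i.1, none)) (P i.1))

lemma card_tripleSet (hP : IsPadding φ P) (i : β × Bool) :
    #(tripleSet φ P i) = #(P i.1) + 2 := by
  rw [tripleSet, card_insert_of_notMem, card_insert_of_notMem (hP.apply_notMem _ _)]
  simp only [mem_insert, φ.injective.eq_iff, Prod.mk.injEq, reduceCtorEq, and_false, false_or]
  exact hP.apply_notMem _ _

lemma twins_tripleSet_some (hP : IsPadding φ P) {t : β} {b : Bool} {y : α}
    (h : Twins (tripleSet φ P) (φ (t, some b)) y) : y = φ (t, some b) := by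
  have hy : y ∈ tripleSet φ P (t, b) := (h (t, b)).mp (mem_insert_self _ _)
  have hy' : y ∉ tripleSet φ P (t, !b) := by
    rw [← h (t, !b)]
    simp only [tripleSet, mem_insert, φ.injective.eq_iff, Prod.mk.injEq, Option.some.injEq,
      reduceCtorEq, true_and, false_or, not_or]
    exact ⟨by cases b <;> decide, hP.apply_notMem _ _⟩
  simp only [tripleSet, mem_insert] at hy hy'
  tauto

lemma twins_tripleSet_none (hP : IsPadding φ P) {t : β} {y : α}
    (h : Twins (tripleSet φ P) (φ (t, none)) y) : y = φ (t, none) := by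
  have hy : y ∈ tripleSet φ P (t, false) := (h (t, false)).mp (by simp [tripleSet])
  simp only [tripleSet, mem_insert] at hy
  obtain rfl | rfl | hy := hy
  · exact (twins_tripleSet_some hP h.symm).symm
  · rfl
  · obtain ⟨s, -, b, rfl⟩ := hP t y hy
    exact (twins_tripleSet_some hP h.symm).symm

lemma twins_tripleSet_apply (hP : IsPadding φ P) (p : β × Option Bool) {y : α}
    (h : Twins (tripleSet φ P) (φ p) y) : y = φ p := by
  obtain ⟨t, _ | b⟩ := p
  · exact twins_tripleSet_none hP h
  · exact twins_tripleSet_some hP h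

lemma twins_tripleSet (hP : IsPadding φ P) {x y : α} (h : Twins (tripleSet φ P) x y) :
    x = y ∨ (x ∉ Set.range φ ∧ y ∉ Set.range φ) := by
  by_cases hx : x ∈ Set.range φ
  · obtain ⟨p, rfl⟩ := hx
    exact Or.inl (twins_tripleSet_apply hP p h).symm
  by_cases hy : y ∈ Set.range φ
  · obtain ⟨p, rfl⟩ := hy
    exact Or.inl (twins_tripleSet_apply hP p h.symm)
  exact Or.inr ⟨hx, hy⟩

end Triples

section Construction

variable {n m k : ℕ}

noncomputable def tripleEmbedding (h : 3 * m ≤ n) : Fin m × Option Bool ↪ Fin n :=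
  (Fintype.equivFinOfCardEq (by simp [mul_comm]) : Fin m × Option Bool ≃ Fin (3 * m)).toEmbedding
    |>.trans (Fin.castLEEmb h)

lemma range_tripleEmbedding (h : 3 * m ≤ n) :
    Set.range (tripleEmbedding h) = {x | x.val < 3 * m} := by
  rw [tripleEmbedding, Function.Embedding.coe_trans, Set.range_comp, Equiv.coe_toEmbedding,
    Equiv.range_eq_univ, Set.image_univ]
  exact Fin.range_castLE h

lemma exists_family_twins_eq_or_le (h3m : 3 * m ≤ n) (hk : 2 ≤ k) (hkm : k ≤ 2 * m) :
    ∃ f : Fin m × Bool → Finset (Fin n), (∀ i, #(f i) = k) ∧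
      ∀ x y, Twins f x y → x = y ∨ (3 * m ≤ x.val ∧ 3 * m ≤ y.val) := by
  obtain ⟨P, hP, hPc⟩ := exists_isPadding (tripleEmbedding h3m) (c := k - 2) (by simp; omega)
  refine ⟨tripleSet (tripleEmbedding h3m) P, fun i => ?_, fun x y hxy => ?_⟩
  · rw [card_tripleSet hP, hPc]
    omega
  · simpa [range_tripleEmbedding] using twins_tripleSet hP hxy

theorem subsetsBaseSize_le_two_mul (G : Subgroup (Perm (Fin n))) (h3m : 3 * m ≤ n)
    (hn : n ≤ 3 * m + 1) (hk : 2 ≤ k) (hkm : k ≤ 2 * m) :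
    subsetsBaseSize n k G ≤ 2 * m := by
  obtain ⟨f, hcard, htwins⟩ := exists_family_twins_eq_or_le h3m hk hkm
  have hsep : Separating f := fun x y hxy => (htwins x y hxy).elim id fun _ => Fin.ext (by omega)
  simpa [mul_comm] using subsetsBaseSize_le_card f hcard fun g _ => eq_one_of_separating hsep

theorem subsetsBaseSize_le_two_mul_add_one (G : Subgroup (Perm (Fin n))) (hn : n = 3 * m + 2)
    (hk : 2 ≤ k) (hkm : k ≤ 2 * m) : subsetsBaseSize n k G ≤ 2 * m + 1 := by
  obtain ⟨f, hcard, htwins⟩ := exists_family_twins_eq_or_le (by omega : 3 * m ≤ n) hk hkm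
  -- a `k`-set containing `3m` but not `3m + 1` separates the two points outside the triples
  obtain ⟨C, haC, hCb, hC⟩ := exists_subsuperset_card_eq (n := k)
    (s := {(⟨3 * m, by omega⟩ : Fin n)}) (t := univ.erase ⟨3 * m + 1, by omega⟩)
    (by simp) (by simp; omega) (by simp; omega)
  have hmemC : ∀ z : Fin n, 3 * m ≤ z.val → (z ∈ C ↔ z.val = 3 * m) := fun z hz =>
    ⟨fun hzC => by
      have hzb : z.val ≠ 3 * m + 1 := fun h => (mem_erase.mp (hCb hzC)).1 (Fin.ext h)
      omega,
      fun hz' => haC (mem_singleton.mpr (Fin.ext hz'))⟩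
  have hsep : Separating fun o : Option (Fin m × Bool) => o.elim C f := by
    intro x y hxy
    refine (htwins x y fun i => hxy (some i)).elim id fun ⟨hx, hy⟩ => Fin.ext ?_
    have hxyC : x ∈ C ↔ y ∈ C := hxy none
    rw [hmemC x hx, hmemC y hy] at hxyC
    omega
  simpa [mul_comm] using subsetsBaseSize_le_card _ (fun o => by cases o <;> simp [hC, hcard])
    fun g _ => eq_one_of_separating hsep

end Construction

lemma subsetsBaseSize_six_three_le (G : Subgroup (Perm (Fin 6))) : subsetsBaseSize 6 3 G ≤ 3 := by
  simpa using subsetsBaseSize_le_card ![{2, 4, 5}, {1, 3, 5}, {0, 3, 4}] (by decide)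
    fun g _ => eq_one_of_separating (by decide)

lemma subsetsBaseSize_six_two_alternatingGroup_le :
    subsetsBaseSize 6 2 (alternatingGroup (Fin 6)) ≤ 3 := by
  simpa using subsetsBaseSize_le_card ![{0, 1}, {1, 2}, {2, 3}] (by decide)
    fun g hg => eq_one_of_mem_alternatingGroup_of_twins (a := 4) (b := 5)
      (by unfold Twins; decide) hg

lemma subsetsBaseSize_five_two_alternatingGroup_le :
    subsetsBaseSize 5 2 (alternatingGroup (Fin 5)) ≤ 2 := by
  simpa using subsetsBaseSize_le_card ![{0, 1}, {1, 2}] (by decide)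
    fun g hg => eq_one_of_mem_alternatingGroup_of_twins (a := 3) (b := 4)
      (by unfold Twins; decide) hg

lemma subsetsBaseSize_six_two_top : subsetsBaseSize 6 2 ⊤ = 4 := by
  simpa using subsetsBaseSize_top_eq ![{0, 1}, {1, 2}, {3, 4}, {4, 5}] (by decide) (by decide)
    fun f hf => not_separating_of_card_eq_two f hf

lemma subsetsBaseSize_five_two_top : subsetsBaseSize 5 2 ⊤ = 3 := by
  simpa using subsetsBaseSize_top_eq ![{0, 1}, {1, 2}, {2, 3}] (by decide) (by decide)
    fun f _ hf => by simpa using hf.card_le_two_pow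

/-- Let `n ≥ 5`, write `n = 3m + δ` with `δ ∈ {0,1,2}`, let `2 ≤ k ≤ n/2`, and let `G` be
`A_n` or `S_n` acting on the `k`-element subsets of `{1, …, n}`. Then the base size is at
most `2m` if `δ ∈ {0,1}` and at most `2m + 1` if `δ = 2`; in particular it is at most
`2n/3`. Moreover the base size is at most `n - 2`, with equality if and only if
`(n, k, G) = (6, 2, S₆)` or `(5, 2, S₅)`. -/
theorem subsetsBaseSize_bounds (n m δ k : ℕ) (hn : 5 ≤ n) (hδ : δ ≤ 2)
    (hnm : n = 3 * m + δ) (hk2 : 2 ≤ k) (hkn : 2 * k ≤ n)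
    (G : Subgroup (Equiv.Perm (Fin n)))
    (hG : G = alternatingGroup (Fin n) ∨ G = ⊤) :
    (δ ≤ 1 → subsetsBaseSize n k G ≤ 2 * m) ∧
    (δ = 2 → subsetsBaseSize n k G ≤ 2 * m + 1) ∧
    3 * subsetsBaseSize n k G ≤ 2 * n ∧
    subsetsBaseSize n k G ≤ n - 2 ∧
    (subsetsBaseSize n k G = n - 2 ↔
      (n = 6 ∧ k = 2 ∧ G = ⊤) ∨ (n = 5 ∧ k = 2 ∧ G = ⊤)) := by
  obtain ⟨hδ1, hb⟩ | ⟨rfl, hb⟩ : δ ≤ 1 ∧ subsetsBaseSize n k G ≤ 2 * m ∨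
      δ = 2 ∧ subsetsBaseSize n k G ≤ 2 * m + 1 := by
    rcases Nat.lt_or_ge δ 2 with hδ' | hδ'
    · exact .inl ⟨by omega, subsetsBaseSize_le_two_mul G (by omega) (by omega) hk2 (by omega)⟩
    · exact .inr ⟨by omega, subsetsBaseSize_le_two_mul_add_one G (by omega) hk2 (by omega)⟩
  · refine ⟨fun _ => hb, fun _ => by omega, by omega, by omega, fun heq => ?_, ?_⟩
    · obtain rfl : n = 6 := by omega
      obtain rfl | rfl : k = 2 ∨ k = 3 := by omega
      · rcases hG with rfl | rfl
        · have := subsetsBaseSize_six_two_alternatingGroup_le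
          omega
        · exact .inl ⟨rfl, rfl, rfl⟩
      · have := subsetsBaseSize_six_three_le G
        omega
    · rintro (⟨rfl, rfl, rfl⟩ | ⟨rfl, -, -⟩)
      · exact subsetsBaseSize_six_two_top
      · omega
  · refine ⟨fun _ => by omega, fun _ => hb, by omega, by omega, fun heq => ?_, ?_⟩
    · obtain rfl : n = 5 := by omega
      obtain rfl : k = 2 := by omega
      rcases hG with rfl | rfl
      · have := subsetsBaseSize_five_two_alternatingGroup_le
        omega
      · exact .inr ⟨rfl, rfl, rfl⟩
    · rintro (⟨rfl, -, -⟩ | ⟨rfl, rfl, rfl⟩)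
      · omega
      · exact subsetsBaseSize_five_two_top
end
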